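/- A companion to Ramanujan's Entry 1.6.6: Let q be a complex number with 0 < |q| < 1. Then ∑_{j=0}^∞ (−1)^j q^{j(j+1)/2} / [(q;q)_j · (1 + q^{j+1})] = (q;q)_∞ / (−q;q)_∞; equivalently, the left-hand side equals φ(−q) = ∑_{k=−∞}^∞ (−1)^k q^{k^2}. -/

import Mathlib

/-!
Expanding `1 / (1 + q^(j+1))` as a geometric series and summing over `j` first, Euler's identity
`∑ Q^(n(n-1)/2) w^n / (Q;Q)_n = (-w;Q)_∞` turns the left-hand side into
`(q;q)_∞ ∑ (-q)^m / (q;q)_m`, and Euler's second identity `∑ z^n / (Q;Q)_n = 1 / (z;Q)_∞`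
evaluates this to `(q;q)_∞ / (-q;q)_∞`. Both identities come from the functional equations
`F w = (1 + w) F (w Q)` and `G (z Q) = (1 - z) G z` of the two series, iterated and passed to the
limit using continuity at `0`.

For the theta series, the double sum of `(-1)^(n+m) q^((n+m)^2) q^m / (q²;q²)_m` over
`n ∈ ℤ`, `m ∈ ℕ` is computed twice: substituting `k = n + m` gives `φ(-q) / (q;q²)_∞`, while
summing over `m` first gives `(-1)^n q^(n^2) (q^(2n+2);q²)_∞` by Euler's identity, which vanishes
for `n < 0`, and then `(q²;q²)_∞ (q;q²)_∞`. So `φ(-q) = (q²;q²)_∞ (q;q²)_∞²`, which equals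
`(q;q)_∞ / (-q;q)_∞` because `(q;q)_∞ = (q;q²)_∞ (q²;q²)_∞` and
`(q;q)_∞ (-q;q)_∞ = (q²;q²)_∞`.
-/

open Complex

/-- Finite q-Pochhammer symbol `(A;Q)_k = ∏_{r=0}^{k-1} (1 - A Q^r)`. -/
noncomputable def qp (A Q : ℂ) (k : ℕ) : ℂ := ∏ r ∈ Finset.range k, (1 - A * Q ^ r)

/-- Infinite q-Pochhammer symbol `(A;Q)_∞ = ∏_{r=0}^{∞} (1 - A Q^r)`. -/
noncomputable def qpInf (A Q : ℂ) : ℂ := ∏' r : ℕ, (1 - A * Q ^ r)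

/-- q-Pochhammer symbol with (possibly non-integer) index:
`(A;Q)_{c k} := (A;Q)_∞ / (A R^k;Q)_∞` where `R = Q^c`. -/
noncomputable def qpc (A Q R : ℂ) (k : ℕ) : ℂ := qpInf A Q / qpInf (A * R ^ k) Q

/-- q-Pochhammer symbol with shifted (possibly non-integer) index:
`(A;Q)_{c k + 1} := (A;Q)_∞ / (A Q R^k;Q)_∞` where `R = Q^c`. -/
noncomputable def qpc1 (A Q R : ℂ) (k : ℕ) : ℂ := qpInf A Q / qpInf (A * Q * R ^ k) Q

open Filter Topology

section QPochhammer

variable {A Q : ℂ}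

@[simp] lemma qp_zero (A Q : ℂ) : qp A Q 0 = 1 := Finset.prod_range_zero _

lemma qp_succ (A Q : ℂ) (n : ℕ) : qp A Q (n + 1) = qp A Q n * (1 - A * Q ^ n) :=
  Finset.prod_range_succ _ _

lemma norm_pow_lt_one (hQ : ‖Q‖ < 1) {n : ℕ} (hn : n ≠ 0) : ‖Q ^ n‖ < 1 := by
  simpa using pow_lt_one₀ (norm_nonneg Q) hQ hn

lemma summable_norm_mul_pow (A : ℂ) (hQ : ‖Q‖ < 1) : Summable fun r : ℕ ↦ ‖A * Q ^ r‖ := by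
  simpa [norm_mul, norm_pow] using
    (summable_geometric_of_lt_one (norm_nonneg Q) hQ).mul_left ‖A‖

lemma multipliable_one_sub_mul_pow (A : ℂ) (hQ : ‖Q‖ < 1) :
    Multipliable fun r : ℕ ↦ 1 - A * Q ^ r := by
  simpa [sub_eq_add_neg] using
    multipliable_one_add_of_summable (f := fun r : ℕ ↦ -(A * Q ^ r))
      (by simpa using summable_norm_mul_pow A hQ)

lemma tendsto_qp (A : ℂ) (hQ : ‖Q‖ < 1) : Tendsto (qp A Q) atTop (𝓝 (qpInf A Q)) :=
  (multipliable_one_sub_mul_pow A hQ).hasProd.tendsto_prod_nat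

lemma qpInf_ne_zero (hQ : ‖Q‖ < 1) (h : ∀ r : ℕ, 1 - A * Q ^ r ≠ 0) : qpInf A Q ≠ 0 := by
  simpa [qpInf, sub_eq_add_neg] using
    tprod_one_add_ne_zero_of_summable (f := fun r : ℕ ↦ -(A * Q ^ r))
      (by simpa [sub_eq_add_neg] using h) (by simpa using summable_norm_mul_pow A hQ)

lemma qpInf_eq_zero (r : ℕ) (h : 1 - A * Q ^ r = 0) : qpInf A Q = 0 :=
  tprod_of_exists_eq_zero ⟨r, h⟩

lemma norm_mul_pow_le (A : ℂ) (hQ : ‖Q‖ ≤ 1) (r : ℕ) : ‖A * Q ^ r‖ ≤ ‖A‖ := by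
  rw [norm_mul, norm_pow]
  exact mul_le_of_le_one_right (norm_nonneg A) (pow_le_one₀ (norm_nonneg Q) hQ)

lemma one_sub_mul_pow_ne_zero (hA : ‖A‖ < 1) (hQ : ‖Q‖ ≤ 1) (r : ℕ) : 1 - A * Q ^ r ≠ 0 := by
  refine sub_ne_zero.mpr fun h ↦ ?_
  simpa [← h] using (norm_mul_pow_le A hQ r).trans_lt hA

lemma qp_ne_zero (h : ∀ r : ℕ, 1 - A * Q ^ r ≠ 0) (n : ℕ) : qp A Q n ≠ 0 :=
  Finset.prod_ne_zero_iff.mpr fun r _ ↦ h r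

lemma qp_mul_qpInf_mul_pow (hQ : ‖Q‖ < 1) (n : ℕ) :
    qp A Q n * qpInf (A * Q ^ n) Q = qpInf A Q := by
  have hshift : (fun r ↦ 1 - A * Q ^ (r + n)) = fun r ↦ 1 - A * Q ^ n * Q ^ r := by
    ext r; ring
  have h : Multipliable fun r ↦ 1 - A * Q ^ (r + n) :=
    hshift ▸ multipliable_one_sub_mul_pow (A * Q ^ n) hQ
  simpa only [qp, qpInf, ← hshift] using
    h.prod_mul_tprod_nat_mul' (f := fun r ↦ 1 - A * Q ^ r) (k := n)

lemma qpInf_mul_pow (hQ : ‖Q‖ < 1) {n : ℕ} (hn : qp A Q n ≠ 0) :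
    qpInf (A * Q ^ n) Q = (qp A Q n)⁻¹ * qpInf A Q := by
  rw [eq_inv_mul_iff_mul_eq₀ hn, qp_mul_qpInf_mul_pow hQ n]

lemma exists_norm_inv_qp_le (hQ : ‖Q‖ < 1) (h : ∀ r : ℕ, 1 - A * Q ^ r ≠ 0) :
    ∃ C, ∀ n, ‖(qp A Q n)⁻¹‖ ≤ C := by
  have := Metric.isBounded_range_of_tendsto _ ((tendsto_qp A hQ).inv₀ (qpInf_ne_zero hQ h))
  obtain ⟨C, hC⟩ := isBounded_iff_forall_norm_le.mp this
  exact ⟨C, fun n ↦ hC _ ⟨n, rfl⟩⟩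

lemma summable_norm_inv_qp_mul_pow (hQ : ‖Q‖ < 1) {ρ : ℝ} (hρ0 : 0 ≤ ρ) (hρ : ρ < 1) :
    Summable fun n ↦ ‖(qp Q Q n)⁻¹‖ * ρ ^ n := by
  obtain ⟨C, hC⟩ := exists_norm_inv_qp_le hQ (one_sub_mul_pow_ne_zero hQ hQ.le)
  exact ((summable_geometric_of_lt_one hρ0 hρ).mul_left C).of_nonneg_of_le
    (fun n ↦ by positivity) fun n ↦ by gcongr; exact hC n

lemma qpInf_mul_qpInf_neg (hQ : ‖Q‖ < 1) : qpInf A Q * qpInf (-A) Q = qpInf (A ^ 2) (Q ^ 2) := by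
  rw [qpInf, qpInf, qpInf, ← (multipliable_one_sub_mul_pow A hQ).tprod_mul
    (multipliable_one_sub_mul_pow (-A) hQ)]
  congr 1 with r
  ring

lemma qpInf_eq_mul_qpInf_sq (hQ : ‖Q‖ < 1) :
    qpInf A Q = qpInf A (Q ^ 2) * qpInf (A * Q) (Q ^ 2) := by
  have hQ2 := norm_pow_lt_one hQ two_ne_zero
  have heven (k : ℕ) : 1 - A * Q ^ (2 * k) = 1 - A * (Q ^ 2) ^ k := by rw [pow_mul]
  have hodd (k : ℕ) : 1 - A * Q ^ (2 * k + 1) = 1 - A * Q * (Q ^ 2) ^ k := by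
    rw [pow_succ, pow_mul]; ring
  rw [qpInf, qpInf, qpInf, ← tprod_even_mul_odd (f := fun r ↦ 1 - A * Q ^ r)]
  · simp only [heven, hodd]
  · simpa only [heven] using multipliable_one_sub_mul_pow A hQ2
  · simpa only [hodd] using multipliable_one_sub_mul_pow (A * Q) hQ2

end QPochhammer

section PowerSeries

variable {c : ℕ → ℂ} {ρ : ℝ}

lemma summable_mul_pow_of_norm_le (hc : Summable fun n ↦ ‖c n‖ * ρ ^ n) {w : ℂ} (hw : ‖w‖ ≤ ρ) :
    Summable fun n ↦ c n * w ^ n :=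
  hc.of_norm_bounded fun n ↦ by rw [norm_mul, norm_pow]; gcongr

lemma tendsto_tsum_mul_pow_of_tendsto_zero (hρ : 0 < ρ) (hc : Summable fun n ↦ ‖c n‖ * ρ ^ n)
    {u : ℕ → ℂ} (hu : Tendsto u atTop (𝓝 0)) :
    Tendsto (fun k ↦ ∑' n, c n * u k ^ n) atTop (𝓝 (c 0)) := by
  have hcont : ContinuousOn (fun w : ℂ ↦ ∑' n, c n * w ^ n) (Metric.closedBall 0 ρ) :=
    continuousOn_tsum (fun n ↦ by fun_prop) hc fun n w hw ↦ by
      rw [norm_mul, norm_pow]; gcongr; simpa using hw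
  have h0 : ∑' n, c n * (0 : ℂ) ^ n = c 0 := by
    rw [tsum_eq_single 0 fun n hn ↦ by simp [hn]]; simp
  rw [← h0]
  exact ((hcont.continuousAt (Metric.closedBall_mem_nhds 0 hρ)).tendsto).comp hu

lemma tsum_mul_pow_sub_tsum_mul_pow_mul {Q b w : ℂ}
    (hrec : ∀ n, c (n + 1) * (1 - Q ^ (n + 1)) = c n * b ^ n)
    (hw : Summable fun n ↦ c n * w ^ n) (hwQ : Summable fun n ↦ c n * (w * Q) ^ n) :
    ∑' n, c n * w ^ n - ∑' n, c n * (w * Q) ^ n = w * ∑' n, c n * (w * b) ^ n := by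
  rw [← hw.tsum_sub hwQ, (hw.sub hwQ).tsum_eq_zero_add, ← tsum_mul_left]
  simp only [pow_zero, sub_self, zero_add]
  congr 1 with n
  linear_combination w ^ (n + 1) * hrec n

end PowerSeries

section Euler

variable {Q : ℂ}

noncomputable def eulerCoeff (Q : ℂ) (n : ℕ) : ℂ := Q ^ n.choose 2 / qp Q Q n

lemma one_sub_pow_succ_ne_zero (hQ : ‖Q‖ < 1) (n : ℕ) : 1 - Q ^ (n + 1) ≠ 0 := by
  simpa [pow_succ'] using one_sub_mul_pow_ne_zero hQ hQ.le n

lemma eulerCoeff_succ (hQ : ‖Q‖ < 1) (n : ℕ) :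
    eulerCoeff Q (n + 1) = eulerCoeff Q n * (Q ^ n / (1 - Q ^ (n + 1))) := by
  have h := qp_ne_zero (one_sub_mul_pow_ne_zero hQ hQ.le) n
  have h' := one_sub_pow_succ_ne_zero hQ n
  rw [eulerCoeff, eulerCoeff, qp_succ, Nat.choose_succ_succ', Nat.choose_one_right, pow_add,
    ← pow_succ']
  field_simp

lemma summable_norm_eulerCoeff_mul_pow (hQ : ‖Q‖ < 1) {ρ : ℝ} (hρ : 0 ≤ ρ) :
    Summable fun n ↦ ‖eulerCoeff Q n‖ * ρ ^ n := by
  have hratio : Tendsto (fun n : ℕ ↦ ρ * ‖Q ^ n / (1 - Q ^ (n + 1))‖) atTop (𝓝 0) := by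
    have hpow := tendsto_pow_atTop_nhds_zero_of_norm_lt_one hQ
    have hden := (hpow.comp (tendsto_add_atTop_nat 1)).const_sub 1
    simpa using ((hpow.div hden (by simp)).norm).const_mul ρ
  refine summable_of_ratio_norm_eventually_le (r := 1 / 2) (by norm_num) ?_
  filter_upwards [hratio.eventually (eventually_le_nhds (by norm_num : (0 : ℝ) < 1 / 2))]
    with n hn
  rw [Real.norm_of_nonneg (by positivity), Real.norm_of_nonneg (by positivity),
    eulerCoeff_succ hQ, norm_mul, pow_succ]
  calc ‖eulerCoeff Q n‖ * ‖Q ^ n / (1 - Q ^ (n + 1))‖ * (ρ ^ n * ρ)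
      = (ρ * ‖Q ^ n / (1 - Q ^ (n + 1))‖) * (‖eulerCoeff Q n‖ * ρ ^ n) := by ring
    _ ≤ 1 / 2 * (‖eulerCoeff Q n‖ * ρ ^ n) := by gcongr

theorem tsum_eulerCoeff_mul_pow (hQ : ‖Q‖ < 1) (w : ℂ) :
    ∑' n, eulerCoeff Q n * w ^ n = qpInf (-w) Q := by
  set F : ℂ → ℂ := fun v ↦ ∑' n, eulerCoeff Q n * v ^ n
  have hsum (v : ℂ) : Summable fun n ↦ eulerCoeff Q n * v ^ n :=
    summable_mul_pow_of_norm_le (summable_norm_eulerCoeff_mul_pow hQ (norm_nonneg v)) le_rfl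
  have hrec (n : ℕ) : eulerCoeff Q (n + 1) * (1 - Q ^ (n + 1)) = eulerCoeff Q n * Q ^ n := by
    rw [eulerCoeff_succ hQ, mul_assoc, div_mul_cancel₀ _ (one_sub_pow_succ_ne_zero hQ n)]
  have hfun (v : ℂ) : F v = (1 + v) * F (v * Q) := by
    linear_combination tsum_mul_pow_sub_tsum_mul_pow_mul hrec (hsum v) (hsum (v * Q))
  have hiter (n : ℕ) : F w = qp (-w) Q n * F (w * Q ^ n) := by
    induction n with
    | zero => simp
    | succ n ih => rw [ih, hfun, qp_succ, pow_succ]; ring_nf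
  have hlim : Tendsto (fun n ↦ F (w * Q ^ n)) atTop (𝓝 1) := by
    rw [show (1 : ℂ) = eulerCoeff Q 0 by simp [eulerCoeff]]
    exact tendsto_tsum_mul_pow_of_tendsto_zero one_pos
      (summable_norm_eulerCoeff_mul_pow hQ zero_le_one)
      (by simpa using (tendsto_pow_atTop_nhds_zero_of_norm_lt_one hQ).const_mul w)
  simpa using tendsto_nhds_unique tendsto_const_nhds
    (((tendsto_qp (-w) hQ).mul hlim).congr fun n ↦ (hiter n).symm)

theorem tsum_inv_qp_mul_pow (hQ : ‖Q‖ < 1) {z : ℂ} (hz : ‖z‖ < 1) :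
    ∑' n, (qp Q Q n)⁻¹ * z ^ n = (qpInf z Q)⁻¹ := by
  set G : ℂ → ℂ := fun v ↦ ∑' n, (qp Q Q n)⁻¹ * v ^ n
  obtain ⟨ρ, hzρ, hρ1⟩ := exists_between hz
  have hρ : 0 < ρ := (norm_nonneg z).trans_lt hzρ
  have hnorm := summable_norm_inv_qp_mul_pow hQ hρ.le hρ1
  have hzQ (n : ℕ) : ‖z * Q ^ n‖ ≤ ρ := (norm_mul_pow_le z hQ.le n).trans hzρ.le
  have hrec (n : ℕ) : (qp Q Q (n + 1))⁻¹ * (1 - Q ^ (n + 1)) = (qp Q Q n)⁻¹ * 1 ^ n := by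
    rw [qp_succ, ← pow_succ', mul_inv, mul_assoc, inv_mul_cancel₀ (one_sub_pow_succ_ne_zero hQ n)]
    simp
  have hfun (n : ℕ) : G (z * Q ^ (n + 1)) = (1 - z * Q ^ n) * G (z * Q ^ n) := by
    have := tsum_mul_pow_sub_tsum_mul_pow_mul hrec
      (summable_mul_pow_of_norm_le hnorm (hzQ n))
      (summable_mul_pow_of_norm_le hnorm (by simpa [pow_succ, mul_assoc] using hzQ (n + 1)))
    simp only [mul_one, G, pow_succ, ← mul_assoc] at this ⊢
    linear_combination -this
  have hiter (n : ℕ) : G (z * Q ^ n) = qp z Q n * G z := by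
    induction n with
    | zero => simp
    | succ n ih => rw [hfun, ih, qp_succ]; ring
  have hlim : Tendsto (fun n ↦ G (z * Q ^ n)) atTop (𝓝 1) := by
    rw [show (1 : ℂ) = (qp Q Q 0)⁻¹ by simp]
    exact tendsto_tsum_mul_pow_of_tendsto_zero hρ hnorm
      (by simpa using (tendsto_pow_atTop_nhds_zero_of_norm_lt_one hQ).const_mul z)
  have hprod : qpInf z Q * G z = 1 := tendsto_nhds_unique
    ((tendsto_qp z hQ).mul_const (G z)) (hlim.congr hiter)
  exact eq_inv_of_mul_eq_one_right hprod

end Euler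

section Companion

variable {q : ℂ}

lemma mul_succ_div_two (j : ℕ) : j * (j + 1) / 2 = j.choose 2 + j := by
  rw [Nat.choose_two_right, ← Nat.triangle_succ, Nat.add_sub_cancel, mul_comm]

lemma companion_term_mul_pow_eq (q : ℂ) (j m : ℕ) :
    (-1) ^ j * q ^ (j * (j + 1) / 2) / qp q q j * (-q ^ (j + 1)) ^ m
      = (-q) ^ m * (eulerCoeff q j * (-q ^ (m + 1)) ^ j) := by
  rw [eulerCoeff, mul_succ_div_two, neg_pow (q ^ (j + 1)), neg_pow (q ^ (m + 1)), neg_pow q,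
    ← pow_mul, ← pow_mul]
  ring

lemma summable_companion_expansion (hq : ‖q‖ < 1) :
    Summable fun p : ℕ × ℕ ↦
      (-1 : ℂ) ^ p.1 * q ^ (p.1 * (p.1 + 1) / 2) / qp q q p.1 * (-q ^ (p.1 + 1)) ^ p.2 := by
  obtain ⟨C, hC⟩ := exists_norm_inv_qp_le hq (one_sub_mul_pow_ne_zero hq hq.le)
  have hC0 : 0 ≤ C := (norm_nonneg _).trans (hC 0)
  have hgeom := summable_geometric_of_lt_one (norm_nonneg q) hq
  refine .of_norm_bounded (g := fun p : ℕ × ℕ ↦ C * ‖q‖ ^ p.1 * ‖q‖ ^ p.2)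
    ((hgeom.mul_left C).mul_of_nonneg hgeom (fun _ ↦ by positivity) fun _ ↦ by positivity) ?_
  rintro ⟨j, m⟩
  have hpow : ‖q‖ ^ (j.choose 2 + j) ≤ ‖q‖ ^ j :=
    pow_le_pow_of_le_one (norm_nonneg q) hq.le le_add_self
  have hpow' : ‖q‖ ^ (j + 1) ≤ ‖q‖ := pow_le_of_le_one (norm_nonneg q) hq.le j.succ_ne_zero
  simp only [div_eq_mul_inv, norm_mul, norm_pow, norm_neg, norm_one, one_pow, one_mul,
    mul_succ_div_two]
  calc ‖q‖ ^ (j.choose 2 + j) * ‖(qp q q j)⁻¹‖ * (‖q‖ ^ (j + 1)) ^ m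
      ≤ ‖q‖ ^ j * C * ‖q‖ ^ m := by gcongr; exact hC j
    _ = C * ‖q‖ ^ j * ‖q‖ ^ m := by ring

theorem tsum_companion (hq : ‖q‖ < 1) :
    ∑' j : ℕ, (-1 : ℂ) ^ j * q ^ (j * (j + 1) / 2) / (qp q q j * (1 + q ^ (j + 1)))
      = qpInf q q / qpInf (-q) q := by
  have hsum := summable_companion_expansion hq
  set a : ℕ → ℂ := fun j ↦ (-1) ^ j * q ^ (j * (j + 1) / 2) / qp q q j
  have hrow (j : ℕ) : ∑' m, a j * (-q ^ (j + 1)) ^ m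
      = (-1 : ℂ) ^ j * q ^ (j * (j + 1) / 2) / (qp q q j * (1 + q ^ (j + 1))) := by
    have hj : ‖-q ^ (j + 1)‖ < 1 := by simpa using norm_pow_lt_one hq j.succ_ne_zero
    rw [tsum_mul_left, tsum_geometric_of_norm_lt_one hj, sub_neg_eq_add, ← div_div,
      div_eq_mul_inv _ (1 + q ^ (j + 1))]
  have hcol (m : ℕ) :
      ∑' j, a j * (-q ^ (j + 1)) ^ m = qpInf q q * ((qp q q m)⁻¹ * (-q) ^ m) := by
    simp only [a, companion_term_mul_pow_eq]
    rw [tsum_mul_left, tsum_eulerCoeff_mul_pow hq, neg_neg, pow_succ',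
      qpInf_mul_pow hq (qp_ne_zero (one_sub_mul_pow_ne_zero hq hq.le) m)]
    ring
  calc _ = ∑' j, ∑' m, a j * (-q ^ (j + 1)) ^ m := (tsum_congr hrow).symm
    _ = ∑' m, ∑' j, a j * (-q ^ (j + 1)) ^ m := hsum.tsum_comm.symm
    _ = qpInf q q / qpInf (-q) q := by
      rw [tsum_congr hcol, tsum_mul_left, tsum_inv_qp_mul_pow hq (by simpa using hq),
        div_eq_mul_inv]

end Companion

section Theta

variable {q : ℂ}

lemma norm_neg_one_zpow_mul_zpow_sq (k : ℤ) :
    ‖(-1 : ℂ) ^ k * q ^ (k ^ 2)‖ = ‖q‖ ^ (k.natAbs ^ 2) := by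
  rw [norm_mul, norm_zpow, norm_zpow, norm_neg, norm_one, one_zpow, one_mul, ← Int.natAbs_sq,
    ← Nat.cast_pow, zpow_natCast]

lemma summable_norm_neg_one_zpow_mul_zpow_sq (hq : ‖q‖ < 1) :
    Summable fun k : ℤ ↦ ‖(-1 : ℂ) ^ k * q ^ (k ^ 2)‖ := by
  have hgeom := summable_geometric_of_lt_one (norm_nonneg q) hq
  have hle (n : ℕ) : ‖q‖ ^ (n ^ 2) ≤ ‖q‖ ^ n :=
    pow_le_pow_of_le_one (norm_nonneg q) hq.le (Nat.le_self_pow two_ne_zero n)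
  refine .of_nat_of_neg (hgeom.of_nonneg_of_le (fun _ ↦ norm_nonneg _) fun n ↦ ?_)
    (hgeom.of_nonneg_of_le (fun _ ↦ norm_nonneg _) fun n ↦ ?_) <;>
  simpa only [norm_neg_one_zpow_mul_zpow_sq, Int.natAbs_neg, Int.natAbs_natCast] using hle n

lemma two_mul_choose_two_add_self (m : ℕ) : 2 * m.choose 2 + m = m ^ 2 := by
  induction m with
  | zero => simp
  | succ m ih =>
    rw [Nat.choose_succ_succ', Nat.choose_one_right]
    linear_combination ih

lemma theta_term_add_mul (hq0 : q ≠ 0) (n : ℤ) (m : ℕ) :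
    (-1 : ℂ) ^ (n + m) * q ^ ((n + m) ^ 2) * ((qp (q ^ 2) (q ^ 2) m)⁻¹ * q ^ m)
      = (-1 : ℂ) ^ n * q ^ (n ^ 2) * (eulerCoeff (q ^ 2) m * (-q ^ (2 * n + 2)) ^ m) := by
  have hexp : (n + m) ^ 2 + m = n ^ 2 + (2 * m.choose 2 : ℕ) + (2 * n + 2) * m := by
    have := congrArg (Nat.cast : ℕ → ℤ) (two_mul_choose_two_add_self m)
    push_cast at this ⊢
    linear_combination -this
  have hpow : q ^ ((n + m) ^ 2) * q ^ m
      = q ^ (n ^ 2) * (q ^ 2) ^ m.choose 2 * (q ^ (2 * n + 2)) ^ m := by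
    rw [← zpow_natCast, ← zpow_add₀ hq0, hexp, zpow_add₀ hq0, zpow_add₀ hq0, zpow_mul,
      zpow_natCast, zpow_natCast, pow_mul]
  rw [eulerCoeff, neg_pow, zpow_add₀ (by norm_num), zpow_natCast]
  linear_combination (-1 : ℂ) ^ n * (-1) ^ m * (qp (q ^ 2) (q ^ 2) m)⁻¹ * hpow

lemma qpInf_zpow_eq_zero (hq0 : q ≠ 0) {n : ℤ} (hn : n < 0) :
    qpInf (q ^ (2 * n + 2)) (q ^ 2) = 0 := by
  refine qpInf_eq_zero (-(n + 1)).toNat ?_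
  rw [← zpow_natCast, ← zpow_natCast, ← zpow_mul, ← zpow_add₀ hq0,
    Int.toNat_of_nonneg (by omega),
    show 2 * n + 2 + ((2 : ℕ) : ℤ) * -(n + 1) = 0 by push_cast; ring, zpow_zero, sub_self]

lemma qpInf_zpow_natCast (hq : ‖q‖ < 1) (N : ℕ) :
    qpInf (q ^ (2 * (N : ℤ) + 2)) (q ^ 2)
      = (qp (q ^ 2) (q ^ 2) N)⁻¹ * qpInf (q ^ 2) (q ^ 2) := by
  have hq2 := norm_pow_lt_one hq two_ne_zero
  rw [← qpInf_mul_pow hq2 (qp_ne_zero (one_sub_mul_pow_ne_zero hq2 hq2.le) N),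
    ← pow_succ', ← pow_mul, show 2 * (N : ℤ) + 2 = ((2 * (N + 1) : ℕ) : ℤ) by push_cast; ring,
    zpow_natCast]

lemma neg_one_pow_mul_pow_sq_mul_inv_qp (q : ℂ) (N : ℕ) :
    (-1 : ℂ) ^ N * q ^ (N ^ 2) * (qp (q ^ 2) (q ^ 2) N)⁻¹ = eulerCoeff (q ^ 2) N * (-q) ^ N := by
  rw [eulerCoeff, ← two_mul_choose_two_add_self, pow_add, pow_mul, neg_pow]
  ring

theorem tsum_neg_one_zpow_mul_zpow_sq (hq0 : q ≠ 0) (hq : ‖q‖ < 1) :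
    ∑' k : ℤ, (-1 : ℂ) ^ k * q ^ (k ^ 2) = qpInf (q ^ 2) (q ^ 2) * qpInf q (q ^ 2) ^ 2 := by
  set θ : ℤ → ℂ := fun k ↦ (-1 : ℂ) ^ k * q ^ (k ^ 2)
  set u : ℕ → ℂ := fun m ↦ (qp (q ^ 2) (q ^ 2) m)⁻¹ * q ^ m
  have hq2 := norm_pow_lt_one hq two_ne_zero
  have hθ : Summable fun k ↦ ‖θ k‖ := summable_norm_neg_one_zpow_mul_zpow_sq hq
  have hu : Summable fun m ↦ ‖u m‖ := by
    simpa [u, norm_mul, norm_pow] using summable_norm_inv_qp_mul_pow hq2 (norm_nonneg q) hq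
  let shear : ℤ × ℕ ≃ ℤ × ℕ :=
    { toFun p := (p.1 + p.2, p.2), invFun p := (p.1 - p.2, p.2),
      left_inv p := by simp, right_inv p := by simp }
  have hsum : Summable fun p : ℤ × ℕ ↦ θ (p.1 + p.2) * u p.2 :=
    (shear.summable_iff (f := fun p : ℤ × ℕ ↦ θ p.1 * u p.2)).mpr
      (summable_mul_of_summable_norm hθ hu)
  have hshear : ∑' p : ℤ × ℕ, θ (p.1 + p.2) * u p.2 = (∑' k, θ k) * (qpInf q (q ^ 2))⁻¹ :=
    calc _ = ∑' p : ℤ × ℕ, θ p.1 * u p.2 := shear.tsum_eq (fun p : ℤ × ℕ ↦ θ p.1 * u p.2)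
      _ = (∑' k, θ k) * ∑' m, u m := (tsum_mul_tsum_of_summable_norm hθ hu).symm
      _ = _ := congrArg _ (tsum_inv_qp_mul_pow hq2 hq)
  have hinner (n : ℤ) : ∑' m : ℕ, θ (n + m) * u m = θ n * qpInf (q ^ (2 * n + 2)) (q ^ 2) := by
    simp only [θ, u, theta_term_add_mul hq0]
    rw [tsum_mul_left, tsum_eulerCoeff_mul_pow hq2, neg_neg]
  have hnat : ∑' n : ℤ, θ n * qpInf (q ^ (2 * n + 2)) (q ^ 2)
      = ∑' N : ℕ, θ N * qpInf (q ^ (2 * (N : ℤ) + 2)) (q ^ 2) := by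
    refine (Nat.cast_injective.tsum_eq fun n hn ↦ ?_).symm
    have hn0 : 0 ≤ n := not_lt.mp fun h ↦ hn (by simp [qpInf_zpow_eq_zero hq0 h])
    exact ⟨n.toNat, Int.toNat_of_nonneg hn0⟩
  have houter : ∑' N : ℕ, θ N * qpInf (q ^ (2 * (N : ℤ) + 2)) (q ^ 2)
      = qpInf (q ^ 2) (q ^ 2) * qpInf q (q ^ 2) := by
    have hterm (N : ℕ) : θ N * qpInf (q ^ (2 * (N : ℤ) + 2)) (q ^ 2)
        = qpInf (q ^ 2) (q ^ 2) * (eulerCoeff (q ^ 2) N * (-q) ^ N) := by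
      rw [qpInf_zpow_natCast hq, ← neg_one_pow_mul_pow_sq_mul_inv_qp]
      simp only [θ, zpow_natCast, ← Nat.cast_pow]
      ring
    rw [tsum_congr hterm, tsum_mul_left, tsum_eulerCoeff_mul_pow hq2, neg_neg]
  have hne : qpInf q (q ^ 2) ≠ 0 := qpInf_ne_zero hq2 (one_sub_mul_pow_ne_zero hq hq2.le)
  rw [hsum.tsum_prod, tsum_congr hinner, hnat, houter, eq_mul_inv_iff_mul_eq₀ hne] at hshear
  rw [← hshear]
  ring

lemma qpInf_div_qpInf_neg (hq : ‖q‖ < 1) :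
    qpInf q q / qpInf (-q) q = qpInf (q ^ 2) (q ^ 2) * qpInf q (q ^ 2) ^ 2 := by
  have hpos : qpInf q q ≠ 0 := qpInf_ne_zero hq (one_sub_mul_pow_ne_zero hq hq.le)
  have hneg : qpInf (-q) q ≠ 0 :=
    qpInf_ne_zero hq (one_sub_mul_pow_ne_zero (by simpa using hq) hq.le)
  have hmul : qpInf q q * qpInf (-q) q = qpInf (q ^ 2) (q ^ 2) := qpInf_mul_qpInf_neg hq
  have hsplit : qpInf q q = qpInf q (q ^ 2) * qpInf (q ^ 2) (q ^ 2) := by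
    rw [qpInf_eq_mul_qpInf_sq hq, ← sq]
  have hsq : qpInf (q ^ 2) (q ^ 2) ≠ 0 := hmul ▸ mul_ne_zero hpos hneg
  calc qpInf q q / qpInf (-q) q = qpInf q q ^ 2 / (qpInf q q * qpInf (-q) q) := by
        field_simp
    _ = (qpInf q (q ^ 2) * qpInf (q ^ 2) (q ^ 2)) ^ 2 / qpInf (q ^ 2) (q ^ 2) := by
        rw [hmul, ← hsplit]
    _ = qpInf (q ^ 2) (q ^ 2) * qpInf q (q ^ 2) ^ 2 := by
        field_simp

end Theta

/-- a companion to Ramanujan's Entry 1.6.6, whose right-hand side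
is Ramanujan's theta function `φ(-q)`. -/
theorem entry_1_6_6_companion (q : ℂ) (hq0 : 0 < ‖q‖)
    (hq : ‖q‖ < 1) :
    (∑' j : ℕ, (-1 : ℂ) ^ j * q ^ (j * (j + 1) / 2) /
        (qp q q j * (1 + q ^ (j + 1)))
      = qpInf q q / qpInf (-q) q) ∧
    (∑' j : ℕ, (-1 : ℂ) ^ j * q ^ (j * (j + 1) / 2) /
        (qp q q j * (1 + q ^ (j + 1)))
      = ∑' k : ℤ, (-1 : ℂ) ^ k * q ^ (k ^ 2)) := by
  refine ⟨tsum_companion hq, ?_⟩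
  rw [tsum_companion hq, tsum_neg_one_zpow_mul_zpow_sq (norm_pos_iff.mp hq0) hq,
    qpInf_div_qpInf_neg hq]
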